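/- If the SOCP lifting variables at each edge of a cycle satisfy the exact equations c_ij + I·s_ij = conj(V_i)·V_j for some nonzero complex phasors V_i, then the sum of the arguments arg(c_ij + I·s_ij) over the directed edges of the cycle is an integer multiple of 2π. -/

import Mathlib

/-!
Each edge value equals `conj (V i) * V (i + 1)`, so the product over the cycle telescopes to
`∏ i, conj (V i) * V i = ∏ i, ‖V i‖ ^ 2`, a positive real number with argument `0`.
Since `arg` turns products into sums modulo `2π`, the sum of the edge arguments vanishes
as a `Real.Angle`, i.e. it is an integer multiple of `2π`.
-/

open Complex Finset ComplexConjugate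
open scoped ComplexOrder

theorem Complex.arg_prod_coe_angle {ι : Type*} {s : Finset ι} {z : ι → ℂ}
    (hz : ∀ i ∈ s, z i ≠ 0) :
    (arg (∏ i ∈ s, z i) : Real.Angle) = ∑ i ∈ s, (arg (z i) : Real.Angle) := by
  classical
  induction s using Finset.induction_on with
  | empty => simp
  | insert a s ha ih =>
    have hs : ∀ i ∈ s, z i ≠ 0 := fun i hi => hz i (mem_insert_of_mem hi)
    rw [prod_insert ha, sum_insert ha,
      arg_mul_coe_angle (hz a (mem_insert_self a s)) (prod_ne_zero_iff.mpr hs), ih hs]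

theorem Complex.exists_sum_arg_eq_int_mul_two_pi_of_prod_pos {ι : Type*} [Fintype ι]
    {z : ι → ℂ} (hz : ∀ i, z i ≠ 0) (hprod : 0 < ∏ i, z i) :
    ∃ m : ℤ, ∑ i, arg (z i) = m * (2 * Real.pi) := by
  have hsum : ((∑ i, arg (z i) : ℝ) : Real.Angle) = 0 := by
    rw [← Real.Angle.coe_coeHom, map_sum, Real.Angle.coe_coeHom,
      ← arg_prod_coe_angle fun i _ => hz i, arg_eq_zero_iff_zero_le.mpr hprod.le,
      Real.Angle.coe_zero]
  obtain ⟨m, hm⟩ := Real.Angle.coe_eq_zero_iff.mp hsum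
  exact ⟨m, by rw [← hm, zsmul_eq_mul]⟩

theorem Complex.prod_conj_mul_perm {ι : Type*} [Fintype ι] (V : ι → ℂ) (σ : Equiv.Perm ι) :
    ∏ i, conj (V i) * V (σ i) = ((∏ i, normSq (V i) : ℝ) : ℂ) := by
  rw [prod_mul_distrib, Equiv.prod_comp σ V, ← prod_mul_distrib, ofReal_prod]
  exact prod_congr rfl fun i _ => by rw [mul_comm, mul_conj]

/-- If the SOCP lifting variables along the edges of a cycle `V 0 → V 1 → ⋯ → V (k-1) → V 0`
satisfy the exact equations `cᵢ + I·sᵢ = conj(Vᵢ)·V_{i+1}` for nonzero phasors `Vᵢ`, then the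
sum of the arguments `arg (cᵢ + I·sᵢ)` over the directed edges of the cycle is an integer
multiple of `2π`. -/
theorem stmt_10 (k : ℕ) [NeZero k] (V : Fin k → ℂ) (hV : ∀ i, V i ≠ 0)
    (c s : Fin k → ℝ)
    (h : ∀ i : Fin k, (c i : ℂ) + (s i : ℂ) * Complex.I = (starRingEnd ℂ (V i)) * V (i + 1)) :
    ∃ m : ℤ, ∑ i : Fin k, Complex.arg ((c i : ℂ) + (s i : ℂ) * Complex.I)
      = m * (2 * Real.pi) := by
  have hedge : ∀ i, (c i : ℂ) + s i * I ≠ 0 := fun i => by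
    rw [h i]
    exact mul_ne_zero ((map_ne_zero _).mpr (hV i)) (hV (i + 1))
  refine exists_sum_arg_eq_int_mul_two_pi_of_prod_pos hedge ?_
  rw [Fintype.prod_congr _ _ h]
  calc (0 : ℂ) < ((∏ i, normSq (V i) : ℝ) : ℂ) :=
        zero_lt_real.mpr (prod_pos fun i _ => normSq_pos.mpr (hV i))
    _ = ∏ i, conj (V i) * V (i + 1) := (prod_conj_mul_perm V (Equiv.addRight 1)).symm
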